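/- Let A be a row-stochastic n×n matrix with δ(A) < 1, where δ(A) = (1/2)·max_{i,j} Σ_s |A_{is} − A_{js}|. Then there exists a probability vector π such that for every x ∈ R^n and every k, ||A^k x − ⟨π, x⟩·1||_∞ ≤ δ(A)^k · Δ(x). In particular the iterates A^k x converge geometrically to the consensus state ⟨π,x⟩·1. -/

import Mathlib

/-!
Averaging with a stochastic row keeps every coordinate between the minimum and the maximum,
so along the iterates `Aᵏ x` the minimum increases and the maximum decreases. For two rows
`a, b` the weights `a - b` sum to zero, hence `(a - b) ⬝ᵥ y = (a - b) ⬝ᵥ (y - c)` with `c` the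
midpoint of the range of `y`, which is at most `(1/2) ∑ |a - b| · Δ(y)`: the spread contracts by
`δ(A)` at each step. The minima and maxima therefore squeeze to a common limit, which is linear in
`x` and so of the form `⟨π, x⟩`, and every coordinate of `Aᵏ x` lies within `δ(A)ᵏ Δ(x)` of it.
-/

open Finset Filter Topology

variable {ι : Type*} [Fintype ι]

noncomputable def spread (x : ι → ℝ) : ℝ := ⨆ p : ι × ι, (x p.1 - x p.2)

section Spread

variable [Nonempty ι]

lemma spread_eq_ciSup_sub_ciInf (x : ι → ℝ) : spread x = (⨆ i, x i) - ⨅ i, x i := by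
  apply le_antisymm
  · exact ciSup_le fun p =>
      sub_le_sub (le_ciSup (Finite.bddAbove_range x) _) (ciInf_le (Finite.bddBelow_range x) _)
  · obtain ⟨i, hi⟩ := exists_eq_ciSup_of_finite (f := x)
    obtain ⟨j, hj⟩ := exists_eq_ciInf_of_finite (f := x)
    rw [← hi, ← hj]
    exact le_ciSup (f := fun p : ι × ι => x p.1 - x p.2) (Finite.bddAbove_range _) (i, j)

lemma spread_nonneg (x : ι → ℝ) : 0 ≤ spread x := by
  rw [spread_eq_ciSup_sub_ciInf, sub_nonneg]
  exact ciInf_le_ciSup (Finite.bddBelow_range x) (Finite.bddAbove_range x)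

lemma abs_sub_midpoint_le_half_spread (x : ι → ℝ) (u : ι) :
    |x u - ((⨆ i, x i) + ⨅ i, x i) / 2| ≤ spread x / 2 := by
  have hsup := le_ciSup (Finite.bddAbove_range x) u
  have hinf := ciInf_le (Finite.bddBelow_range x) u
  rw [spread_eq_ciSup_sub_ciInf, abs_le]
  constructor <;> linarith

end Spread

lemma dotProduct_sub_dotProduct_le {a b y : ι → ℝ} (hab : ∑ u, a u = ∑ u, b u) (c r : ℝ)
    (hy : ∀ u, |y u - c| ≤ r) : a ⬝ᵥ y - b ⬝ᵥ y ≤ (∑ u, |a u - b u|) * r := by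
  have hc : ∑ u, (a u - b u) * c = 0 := by rw [← sum_mul, sum_sub_distrib, hab, sub_self, zero_mul]
  calc a ⬝ᵥ y - b ⬝ᵥ y = ∑ u, (a u - b u) * y u - ∑ u, (a u - b u) * c := by
        rw [hc, sub_zero]; simp only [dotProduct, sub_mul, sum_sub_distrib]
    _ = ∑ u, (a u - b u) * (y u - c) := by simp only [← sum_sub_distrib, mul_sub]
    _ ≤ ∑ u, |a u - b u| * r := sum_le_sum fun u _ =>
        (le_abs_self _).trans <| (abs_mul _ _).trans_le <|
          mul_le_mul_of_nonneg_left (hy u) (abs_nonneg _)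
    _ = (∑ u, |a u - b u|) * r := (sum_mul ..).symm

namespace Matrix

noncomputable def doeblinCoeff (A : Matrix ι ι ℝ) : ℝ :=
  1 / 2 * sSup {s : ℝ | ∃ i j : ι, s = ∑ u, |A i u - A j u|}

lemma sum_abs_sub_le_two_mul_doeblinCoeff (A : Matrix ι ι ℝ) (i j : ι) :
    ∑ u, |A i u - A j u| ≤ 2 * doeblinCoeff A := by
  have hbdd : BddAbove {s : ℝ | ∃ i j : ι, s = ∑ u, |A i u - A j u|} :=
    ((Set.finite_range fun p : ι × ι => ∑ u, |A p.1 u - A p.2 u|).subset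
      (by rintro _ ⟨i, j, rfl⟩; exact ⟨(i, j), rfl⟩)).bddAbove
  have := le_csSup hbdd ⟨i, j, rfl⟩
  rw [doeblinCoeff]
  linarith

lemma doeblinCoeff_nonneg [Nonempty ι] (A : Matrix ι ι ℝ) : 0 ≤ doeblinCoeff A := by
  have := sum_abs_sub_le_two_mul_doeblinCoeff A (Classical.arbitrary ι) (Classical.arbitrary ι)
  simp only [sub_self, abs_zero, sum_const_zero] at this
  linarith

variable [DecidableEq ι] {A : Matrix ι ι ℝ}

lemma mulVec_apply_le_ciSup (hA : A ∈ rowStochastic ℝ ι) (y : ι → ℝ) (i : ι) :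
    (A *ᵥ y) i ≤ ⨆ j, y j :=
  calc (A *ᵥ y) i = ∑ j, A i j * y j := rfl
    _ ≤ ∑ j, A i j * ⨆ j, y j := sum_le_sum fun j _ =>
        mul_le_mul_of_nonneg_left (le_ciSup (Finite.bddAbove_range y) j)
          (nonneg_of_mem_rowStochastic hA)
    _ = ⨆ j, y j := by rw [← sum_mul, sum_row_of_mem_rowStochastic hA, one_mul]

lemma ciInf_le_mulVec_apply (hA : A ∈ rowStochastic ℝ ι) (y : ι → ℝ) (i : ι) :
    ⨅ j, y j ≤ (A *ᵥ y) i :=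
  calc ⨅ j, y j = ∑ j, A i j * ⨅ j, y j := by
        rw [← sum_mul, sum_row_of_mem_rowStochastic hA, one_mul]
    _ ≤ ∑ j, A i j * y j := sum_le_sum fun j _ =>
        mul_le_mul_of_nonneg_left (ciInf_le (Finite.bddBelow_range y) j)
          (nonneg_of_mem_rowStochastic hA)
    _ = (A *ᵥ y) i := rfl

lemma spread_mulVec_le [Nonempty ι] (hA : A ∈ rowStochastic ℝ ι) (y : ι → ℝ) :
    spread (A *ᵥ y) ≤ doeblinCoeff A * spread y := by
  refine ciSup_le fun ⟨i, j⟩ => ?_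
  have hrows : ∑ u, A i u = ∑ u, A j u := by
    rw [sum_row_of_mem_rowStochastic hA, sum_row_of_mem_rowStochastic hA]
  calc (A *ᵥ y) i - (A *ᵥ y) j ≤ (∑ u, |A i u - A j u|) * (spread y / 2) :=
        dotProduct_sub_dotProduct_le hrows _ _ (abs_sub_midpoint_le_half_spread y)
    _ ≤ 2 * doeblinCoeff A * (spread y / 2) :=
        mul_le_mul_of_nonneg_right (sum_abs_sub_le_two_mul_doeblinCoeff A i j)
          (by linarith [spread_nonneg y])
    _ = doeblinCoeff A * spread y := by ring

lemma pow_succ_mulVec (A : Matrix ι ι ℝ) (k : ℕ) (x : ι → ℝ) :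
    A ^ (k + 1) *ᵥ x = A *ᵥ (A ^ k *ᵥ x) := by
  rw [pow_succ', mulVec_mulVec]

lemma spread_pow_mulVec_le [Nonempty ι] (hA : A ∈ rowStochastic ℝ ι) (x : ι → ℝ) (k : ℕ) :
    spread (A ^ k *ᵥ x) ≤ doeblinCoeff A ^ k * spread x := by
  induction k with
  | zero => simp
  | succ k ih =>
    calc spread (A ^ (k + 1) *ᵥ x) ≤ doeblinCoeff A * spread (A ^ k *ᵥ x) := by
          rw [pow_succ_mulVec]; exact spread_mulVec_le hA _
      _ ≤ doeblinCoeff A * (doeblinCoeff A ^ k * spread x) :=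
          mul_le_mul_of_nonneg_left ih (doeblinCoeff_nonneg A)
      _ = doeblinCoeff A ^ (k + 1) * spread x := by ring

lemma antitone_ciSup_pow_mulVec [Nonempty ι] (hA : A ∈ rowStochastic ℝ ι) (x : ι → ℝ) :
    Antitone fun k => ⨆ i, (A ^ k *ᵥ x) i :=
  antitone_nat_of_succ_le fun k => by
    rw [pow_succ_mulVec]; exact ciSup_le (mulVec_apply_le_ciSup hA _)

lemma monotone_ciInf_pow_mulVec [Nonempty ι] (hA : A ∈ rowStochastic ℝ ι) (x : ι → ℝ) :
    Monotone fun k => ⨅ i, (A ^ k *ᵥ x) i :=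
  monotone_nat_of_le_succ fun k => by
    rw [pow_succ_mulVec]; exact le_ciInf (ciInf_le_mulVec_apply hA _)

noncomputable def consensusValue (A : Matrix ι ι ℝ) (x : ι → ℝ) : ℝ :=
  ⨆ k : ℕ, ⨅ i, (A ^ k *ᵥ x) i

section Consensus

variable [Nonempty ι]

lemma ciInf_pow_mulVec_le_ciSup_pow_mulVec (hA : A ∈ rowStochastic ℝ ι) (x : ι → ℝ) (j k : ℕ) :
    ⨅ i, (A ^ j *ᵥ x) i ≤ ⨆ i, (A ^ k *ᵥ x) i := by
  have hle : ∀ m, ⨅ i, (A ^ m *ᵥ x) i ≤ ⨆ i, (A ^ m *ᵥ x) i := fun m =>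
    ciInf_le_ciSup (Finite.bddBelow_range _) (Finite.bddAbove_range _)
  rcases le_total j k with h | h
  · exact (monotone_ciInf_pow_mulVec hA x h).trans (hle k)
  · exact (hle j).trans (antitone_ciSup_pow_mulVec hA x h)

lemma ciInf_pow_mulVec_le_consensusValue (hA : A ∈ rowStochastic ℝ ι) (x : ι → ℝ) (k : ℕ) :
    ⨅ i, (A ^ k *ᵥ x) i ≤ consensusValue A x :=
  le_ciSup ⟨_, Set.forall_mem_range.2 fun j => ciInf_pow_mulVec_le_ciSup_pow_mulVec hA x j 0⟩ k

lemma consensusValue_le_ciSup_pow_mulVec (hA : A ∈ rowStochastic ℝ ι) (x : ι → ℝ) (k : ℕ) :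
    consensusValue A x ≤ ⨆ i, (A ^ k *ᵥ x) i :=
  ciSup_le fun j => ciInf_pow_mulVec_le_ciSup_pow_mulVec hA x j k

lemma abs_pow_mulVec_apply_sub_consensusValue_le (hA : A ∈ rowStochastic ℝ ι) (x : ι → ℝ)
    (k : ℕ) (i : ι) :
    |(A ^ k *ᵥ x) i - consensusValue A x| ≤ doeblinCoeff A ^ k * spread x := by
  have hsup := le_ciSup (Finite.bddAbove_range (A ^ k *ᵥ x)) i
  have hinf := ciInf_le (Finite.bddBelow_range (A ^ k *ᵥ x)) i
  have hlo := ciInf_pow_mulVec_le_consensusValue hA x k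
  have hhi := consensusValue_le_ciSup_pow_mulVec hA x k
  have hspread := spread_pow_mulVec_le hA x k
  rw [spread_eq_ciSup_sub_ciInf] at hspread
  rw [abs_le]
  constructor <;> linarith

lemma tendsto_pow_mulVec_apply (hA : A ∈ rowStochastic ℝ ι) (hδ : doeblinCoeff A < 1)
    (x : ι → ℝ) (i : ι) :
    Tendsto (fun k => (A ^ k *ᵥ x) i) atTop (𝓝 (consensusValue A x)) := by
  have hgeom : Tendsto (fun k => doeblinCoeff A ^ k * spread x) atTop (𝓝 0) := by
    simpa using (tendsto_pow_atTop_nhds_zero_of_lt_one (doeblinCoeff_nonneg A) hδ).mul_const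
      (spread x)
  exact tendsto_iff_norm_sub_tendsto_zero.2 <| squeeze_zero (fun _ => norm_nonneg _)
    (fun k => (Real.norm_eq_abs _).trans_le
      (abs_pow_mulVec_apply_sub_consensusValue_le hA x k i)) hgeom

noncomputable def consensusWeights (A : Matrix ι ι ℝ) : ι → ℝ :=
  fun j => consensusValue A (Pi.single j 1)

lemma consensusValue_eq_sum (hA : A ∈ rowStochastic ℝ ι) (hδ : doeblinCoeff A < 1)
    (x : ι → ℝ) : consensusValue A x = ∑ j, consensusWeights A j * x j := by
  let i := Classical.arbitrary ι
  have hcol : ∀ k, (A ^ k *ᵥ x) i = ∑ j, (A ^ k *ᵥ Pi.single j 1) i * x j := fun k => by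
    simp only [mulVec_single_one, col_apply]; rfl
  refine tendsto_nhds_unique (tendsto_pow_mulVec_apply hA hδ x i) ?_
  simp only [hcol]
  exact tendsto_finsetSum _ fun j _ => (tendsto_pow_mulVec_apply hA hδ _ i).mul_const (x j)

lemma consensusWeights_mem_stdSimplex (hA : A ∈ rowStochastic ℝ ι) (hδ : doeblinCoeff A < 1) :
    consensusWeights A ∈ stdSimplex ℝ ι := by
  refine ⟨fun j => ?_, ?_⟩
  · refine le_trans (le_ciInf fun i => ?_) (ciInf_pow_mulVec_le_consensusValue hA _ 0)
    simp only [pow_zero, one_mulVec]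
    exact (Pi.single_nonneg.2 zero_le_one : (0 : ι → ℝ) ≤ Pi.single j 1) i
  · have hone : consensusValue A 1 = 1 := by
      simp [consensusValue, (pow_mem hA _ : _ ∈ rowStochastic ℝ ι).2]
    simpa [hone] using (consensusValue_eq_sum hA hδ 1).symm

lemma norm_pow_mulVec_sub_le (hA : A ∈ rowStochastic ℝ ι) (hδ : doeblinCoeff A < 1)
    (x : ι → ℝ) (k : ℕ) :
    ‖A ^ k *ᵥ x - (∑ i, consensusWeights A i * x i) • (1 : ι → ℝ)‖ ≤
      doeblinCoeff A ^ k * spread x := by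
  refine (pi_norm_le_iff_of_nonneg (mul_nonneg (pow_nonneg (doeblinCoeff_nonneg A) k)
    (spread_nonneg x))).2 fun i => ?_
  rw [← consensusValue_eq_sum hA hδ]
  simpa using abs_pow_mulVec_apply_sub_consensusValue_le hA x k i

end Consensus

end Matrix

/-- Geometric convergence to consensus: if the Doeblin coefficient of a row-stochastic
matrix is `< 1`, the iterates converge geometrically to a rank-one projection. -/
theorem stmt18 (n : ℕ) (hn : 0 < n) (A : Matrix (Fin n) (Fin n) ℝ)
    (hpos : ∀ i j, 0 ≤ A i j) (hrow : ∀ i, ∑ j, A i j = 1)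
    (hδ : (1 / 2) * sSup {s : ℝ | ∃ i j : Fin n, s = ∑ u, |A i u - A j u|} < 1) :
    ∃ π : Fin n → ℝ, (∀ i, 0 ≤ π i) ∧ ∑ i, π i = 1 ∧
      ∀ (x : Fin n → ℝ) (k : ℕ),
        ‖(A ^ k).mulVec x - (∑ i, π i * x i) • (1 : Fin n → ℝ)‖ ≤
          ((1 / 2) * sSup {s : ℝ | ∃ i j : Fin n, s = ∑ u, |A i u - A j u|}) ^ k *
            (⨆ p : Fin n × Fin n, (x p.1 - x p.2)) := by
  have : Nonempty (Fin n) := ⟨⟨0, hn⟩⟩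
  have hA : A ∈ Matrix.rowStochastic ℝ (Fin n) := Matrix.mem_rowStochastic_iff_sum.2 ⟨hpos, hrow⟩
  obtain ⟨hπ_nonneg, hπ_sum⟩ := Matrix.consensusWeights_mem_stdSimplex hA hδ
  exact ⟨_, hπ_nonneg, hπ_sum, Matrix.norm_pow_mulVec_sub_le hA hδ⟩
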